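/- arXiv:1604.02158 — 2 statements merged into one kernel-verified Lean document; each statement's English description precedes it below -/
import Mathlib

section
/- Let X follow a Student t distribution with n > 1 degrees of freedom. There exist numerical constants 0 < c₁ < c₂ such that for any x ≥ 1, c₁ n^{−1/2} (1 + x²/n)^{−n/2} ≤ P(|X| > x) ≤ c₂ (1 + x²/n)^{−n/2}. In particular, for any u ≥ 1, c₁ n^{−1/2} e^{−u/2} ≤ P( n log(1 + X²/n) ≥ u ) ≤ c₂ e^{−u/2}. -/
open MeasureTheory Real

/-- The Student `t` distribution with `n` degrees of freedom, defined through its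
density `Γ((n+1)/2) / (√(nπ) Γ(n/2)) (1 + x²/n)^{-(n+1)/2}`. -/
noncomputable def studentT (n : ℝ) : Measure ℝ :=
  volume.withDensity fun x =>
    ENNReal.ofReal (Real.Gamma ((n + 1) / 2) /
      (Real.sqrt (n * Real.pi) * Real.Gamma (n / 2)) *
      (1 + x ^ 2 / n) ^ (-((n + 1) / 2)))

/-!
The density is `C_d h(y)` with `h(y) = (1 + y²/d)^{-(d+1)/2}`. Log-convexity of `Γ`
(Gautschi's inequality) pins the normalising constant `C_d` between `1/4` and `1/2`.
For the tail integral, `(1 + y²/d)^{-(d-1)/2} / y` has derivative `-(1 + 1/y²) h(y)`, the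
analogue of the Gaussian Mills-ratio identity; since `1 ≤ 1 + 1/y² ≤ 2` for `y ≥ 1`, the
integral of `h` over `(x, ∞)` lies between half of and all of
`(1 + x²/d)^{-(d-1)/2} / x = (√(1 + x²/d) / x) (1 + x²/d)^{-d/2}`,
and `1/√d ≤ √(1 + x²/d) / x ≤ 3/2`. The logarithmic form is the substitution
`1 + x²/d = e^{u/d}`.
-/

open Set Filter Topology

namespace Real

theorem Gamma_add_half_le_sqrt_mul_Gamma {x : ℝ} (hx : 0 < x) :
    Gamma (x + 1 / 2) ≤ √x * Gamma x := by
  have hΓ := Gamma_pos_of_pos hx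
  have h := Gamma_mul_add_mul_le_rpow_Gamma_mul_rpow_Gamma hx (by linarith : 0 < x + 1)
    one_half_pos one_half_pos (by norm_num)
  rw [← sqrt_eq_rpow, ← sqrt_eq_rpow, ← sqrt_mul hΓ.le, Gamma_add_one hx.ne', ← mul_assoc,
    mul_comm (Gamma x), mul_assoc, sqrt_mul hx.le, sqrt_mul_self hΓ.le] at h
  convert h using 2
  ring

theorem mul_Gamma_le_sqrt_add_half_mul_Gamma_add_half {x : ℝ} (hx : 0 < x) :
    x * Gamma x ≤ √(x + 1 / 2) * Gamma (x + 1 / 2) := by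
  have h := Gamma_add_half_le_sqrt_mul_Gamma (by linarith : 0 < x + 1 / 2)
  rwa [add_assoc, add_halves, Gamma_add_one hx.ne'] at h

end Real

noncomputable def studentTNormConst (d : ℝ) : ℝ :=
  Gamma ((d + 1) / 2) / (√(d * π) * Gamma (d / 2))

theorem studentTNormConst_le_half {d : ℝ} (hd : 0 < d) : studentTNormConst d ≤ 1 / 2 := by
  have hΓ := Gamma_pos_of_pos (half_pos hd)
  have hratio : Gamma ((d + 1) / 2) ≤ √(d / 2) * Gamma (d / 2) := by
    rw [add_div]
    exact Gamma_add_half_le_sqrt_mul_Gamma (half_pos hd)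
  have hsqrt : 2 * √(d / 2) ≤ √(d * π) := by
    rw [show (2 : ℝ) = √(2 ^ 2) by simp, ← sqrt_mul (by positivity)]
    exact sqrt_le_sqrt (by nlinarith [pi_gt_three])
  rw [studentTNormConst, div_le_iff₀ (by positivity)]
  nlinarith

theorem quarter_le_studentTNormConst {d : ℝ} (hd : 1 ≤ d) : 1 / 4 ≤ studentTNormConst d := by
  have hΓ := Gamma_pos_of_pos (by linarith : 0 < d / 2)
  have hratio : d / 2 * Gamma (d / 2) ≤ √((d + 1) / 2) * Gamma ((d + 1) / 2) := by
    rw [add_div]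
    exact mul_Gamma_le_sqrt_add_half_mul_Gamma_add_half (by linarith)
  have hsqrt : √(d * π) * √((d + 1) / 2) ≤ 4 * (d / 2) := by
    rw [← sqrt_mul (by positivity), ← sqrt_sq (by linarith : 0 ≤ 4 * (d / 2))]
    exact sqrt_le_sqrt (by nlinarith [pi_lt_four, pi_pos])
  rw [studentTNormConst, le_div_iff₀ (by positivity)]
  nlinarith [Gamma_pos_of_pos (by linarith : 0 < (d + 1) / 2), sqrt_nonneg (d * π)]

section TailIntegral

variable {d : ℝ}

theorem hasDerivAt_neg_one_add_sq_div_rpow_div_self (hd : 0 < d) {y : ℝ} (hy : y ≠ 0) :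
    HasDerivAt (fun y => -((1 + y ^ 2 / d) ^ (-((d - 1) / 2)) / y))
      ((1 + 1 / y ^ 2) * (1 + y ^ 2 / d) ^ (-((d + 1) / 2))) y := by
  have hu : 0 < 1 + y ^ 2 / d := by positivity
  have hbase : HasDerivAt (fun y : ℝ => 1 + y ^ 2 / d) (2 * y / d) y := by
    simpa using ((hasDerivAt_pow 2 y).div_const d).const_add 1
  refine ((hbase.rpow_const (p := -((d - 1) / 2)) (Or.inl hu.ne')).div (hasDerivAt_id' y)
    hy).neg.congr_deriv ?_
  rw [show -((d - 1) / 2) - 1 = -((d + 1) / 2) by ring,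
    show -((d - 1) / 2) = 1 + -((d + 1) / 2) by ring, rpow_add hu, rpow_one]
  field_simp
  ring

theorem tendsto_neg_one_add_sq_div_rpow_div_self_atTop (hd : 1 < d) :
    Tendsto (fun y => -((1 + y ^ 2 / d) ^ (-((d - 1) / 2)) / y)) atTop (𝓝 0) := by
  have hbase : Tendsto (fun y : ℝ => 1 + y ^ 2 / d) atTop atTop :=
    tendsto_atTop_add_const_left _ 1
      ((tendsto_pow_atTop two_ne_zero).atTop_div_const (by linarith))
  simpa [div_eq_mul_inv] using
    (((tendsto_rpow_neg_atTop (by linarith : 0 < (d - 1) / 2)).comp hbase).mul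
      tendsto_inv_atTop_zero).neg

theorem integrableOn_Ioi_one_add_inv_sq_mul_rpow (hd : 1 < d) {x : ℝ} (hx : 0 < x) :
    IntegrableOn (fun y => (1 + 1 / y ^ 2) * (1 + y ^ 2 / d) ^ (-((d + 1) / 2))) (Ioi x) :=
  integrableOn_Ioi_deriv_of_nonneg'
    (fun y hy => hasDerivAt_neg_one_add_sq_div_rpow_div_self (by linarith)
      (by linarith [mem_Ici.1 hy]))
    (fun y _ => by positivity) (tendsto_neg_one_add_sq_div_rpow_div_self_atTop hd)

theorem integral_Ioi_one_add_inv_sq_mul_rpow (hd : 1 < d) {x : ℝ} (hx : 0 < x) :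
    ∫ y in Ioi x, (1 + 1 / y ^ 2) * (1 + y ^ 2 / d) ^ (-((d + 1) / 2)) =
      (1 + x ^ 2 / d) ^ (-((d - 1) / 2)) / x := by
  rw [integral_Ioi_of_hasDerivAt_of_nonneg'
    (fun y hy => hasDerivAt_neg_one_add_sq_div_rpow_div_self (by linarith)
      (by linarith [mem_Ici.1 hy]))
    (fun y _ => by positivity) (tendsto_neg_one_add_sq_div_rpow_div_self_atTop hd)]
  ring

theorem integrableOn_Ioi_one_add_sq_div_rpow (hd : 1 < d) {x : ℝ} (hx : 0 < x) :
    IntegrableOn (fun y => (1 + y ^ 2 / d) ^ (-((d + 1) / 2))) (Ioi x) := by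
  refine (integrableOn_Ioi_one_add_inv_sq_mul_rpow hd hx).mono' ?_ ?_
  · exact (Continuous.rpow_const (by fun_prop) fun y =>
      Or.inl (by positivity)).aestronglyMeasurable
  · refine (ae_restrict_iff' measurableSet_Ioi).2 (ae_of_all _ fun y _ => ?_)
    have : 0 ≤ (1 + y ^ 2 / d) ^ (-((d + 1) / 2)) := by positivity
    rw [norm_of_nonneg this]
    nlinarith [show 0 ≤ 1 / y ^ 2 by positivity]

theorem integral_Ioi_one_add_sq_div_rpow_le (hd : 1 < d) {x : ℝ} (hx : 0 < x) :
    ∫ y in Ioi x, (1 + y ^ 2 / d) ^ (-((d + 1) / 2)) ≤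
      (1 + x ^ 2 / d) ^ (-((d - 1) / 2)) / x := by
  rw [← integral_Ioi_one_add_inv_sq_mul_rpow hd hx]
  refine setIntegral_mono_on (integrableOn_Ioi_one_add_sq_div_rpow hd hx)
    (integrableOn_Ioi_one_add_inv_sq_mul_rpow hd hx) measurableSet_Ioi fun y _ => ?_
  have : 0 ≤ (1 + y ^ 2 / d) ^ (-((d + 1) / 2)) := by positivity
  nlinarith [show 0 ≤ 1 / y ^ 2 by positivity]

theorem le_two_mul_integral_Ioi_one_add_sq_div_rpow (hd : 1 < d) {x : ℝ} (hx : 1 ≤ x) :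
    (1 + x ^ 2 / d) ^ (-((d - 1) / 2)) / x ≤
      2 * ∫ y in Ioi x, (1 + y ^ 2 / d) ^ (-((d + 1) / 2)) := by
  have hx0 : 0 < x := by linarith
  rw [← integral_Ioi_one_add_inv_sq_mul_rpow hd hx0, ← integral_const_mul]
  refine setIntegral_mono_on (integrableOn_Ioi_one_add_inv_sq_mul_rpow hd hx0)
    ((integrableOn_Ioi_one_add_sq_div_rpow hd hx0).const_mul 2) measurableSet_Ioi fun y hy => ?_
  have hy1 : 1 ≤ y := hx.trans (mem_Ioi.1 hy).le
  have : 0 ≤ (1 + y ^ 2 / d) ^ (-((d + 1) / 2)) := by positivity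
  have : 1 / y ^ 2 ≤ 1 := by
    rw [div_le_one (by positivity)]
    nlinarith
  nlinarith

end TailIntegral

theorem withDensity_setOf_lt_abs_of_even {f : ℝ → ENNReal} (hf : ∀ y, f (-y) = f y) {x : ℝ}
    (hx : 0 ≤ x) : volume.withDensity f {y | x < |y|} = 2 * ∫⁻ y in Ioi x, f y := by
  have hset : {y : ℝ | x < |y|} = Iio (-x) ∪ Ioi x := by
    ext y
    simp [lt_abs, lt_neg, or_comm]
  have hdisj : Disjoint (Iio (-x)) (Ioi x) :=
    (Iic_disjoint_Ioi (by linarith)).mono_left Iio_subset_Iic_self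
  have hreflect : ∫⁻ y in Iio (-x), f y = ∫⁻ y in Ioi x, f y := by
    simpa [hf] using (Measure.measurePreserving_neg volume).setLIntegral_comp_preimage_emb
      measurableEmbedding_neg f (Ioi x)
  rw [hset, withDensity_apply _ (measurableSet_Iio.union measurableSet_Ioi),
    lintegral_union measurableSet_Ioi hdisj, hreflect, two_mul]

theorem studentT_setOf_lt_abs {d x : ℝ} (hd : 1 < d) (hx : 0 < x) :
    (studentT d {y | x < |y|}).toReal =
      2 * studentTNormConst d * ∫ y in Ioi x, (1 + y ^ 2 / d) ^ (-((d + 1) / 2)) := by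
  have hC : 0 ≤ studentTNormConst d := by linarith [quarter_le_studentTNormConst hd.le]
  rw [studentT, withDensity_setOf_lt_abs_of_even (fun y => by rw [neg_sq]) hx.le,
    ← ofReal_integral_eq_lintegral_ofReal
      ((integrableOn_Ioi_one_add_sq_div_rpow hd hx).const_mul _)
      (ae_of_all _ fun y => by positivity),
    ENNReal.toReal_mul, ENNReal.toReal_ofReal
      (setIntegral_nonneg measurableSet_Ioi fun y _ => by positivity),
    integral_const_mul, mul_assoc]
  rfl

theorem studentT_setOf_le_abs (d x : ℝ) :
    studentT d {y | x ≤ |y|} = studentT d {y | x < |y|} := by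
  refine measure_congr ((withDensity_absolutelyContinuous _ _).ae_eq ?_)
  filter_upwards [Measure.ae_ne volume x, Measure.ae_ne volume (-x)] with y hx hnx
  refine propext ⟨fun h => h.lt_of_ne fun heq => ?_, le_of_lt⟩
  rcases eq_or_eq_neg_of_abs_eq heq.symm with rfl | rfl
  · exact hx rfl
  · exact hnx rfl

theorem studentT_setOf_lt_abs_bounds {d x : ℝ} (hd : 1 < d) (hx : 1 ≤ x) :
    1 / 4 / √d * (1 + x ^ 2 / d) ^ (-d / 2) ≤ (studentT d {y | x < |y|}).toReal ∧
      (studentT d {y | x < |y|}).toReal ≤ 3 / 2 * (1 + x ^ 2 / d) ^ (-d / 2) := by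
  have hx0 : 0 < x := by linarith
  have hd0 : 0 < d := by linarith
  have hu : 0 < 1 + x ^ 2 / d := by positivity
  have hsplit : (1 + x ^ 2 / d) ^ (-((d - 1) / 2)) / x =
      √(1 + x ^ 2 / d) / x * (1 + x ^ 2 / d) ^ (-d / 2) := by
    rw [sqrt_eq_rpow, div_mul_eq_mul_div, ← rpow_add hu]
    ring_nf
  have hratio_lower : 1 / √d ≤ √(1 + x ^ 2 / d) / x := by
    rw [div_le_div_iff₀ (by positivity) hx0, one_mul, ← sqrt_mul hu.le]
    refine le_sqrt_of_sq_le ?_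
    field_simp
    nlinarith
  have hratio_upper : √(1 + x ^ 2 / d) / x ≤ 3 / 2 := by
    rw [div_le_iff₀ hx0]
    refine sqrt_le_iff.2 ⟨by positivity, ?_⟩
    have : x ^ 2 / d ≤ x ^ 2 := div_le_self (by positivity) hd.le
    nlinarith
  have hC := quarter_le_studentTNormConst hd.le
  have hC' := studentTNormConst_le_half hd0
  have hI := integral_Ioi_one_add_sq_div_rpow_le hd hx0
  have hI' := le_two_mul_integral_Ioi_one_add_sq_div_rpow hd hx
  have hP : 0 < (1 + x ^ 2 / d) ^ (-d / 2) := rpow_pos_of_pos hu _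
  rw [hsplit] at hI hI'
  rw [studentT_setOf_lt_abs hd hx0]
  constructor
  · calc 1 / 4 / √d * (1 + x ^ 2 / d) ^ (-d / 2)
        ≤ 1 / 4 * (√(1 + x ^ 2 / d) / x * (1 + x ^ 2 / d) ^ (-d / 2)) := by
          rw [div_eq_mul_one_div (1 / 4), mul_assoc]
          gcongr
      _ ≤ _ := by nlinarith
  · calc _ ≤ 2 * (1 / 2) * (√(1 + x ^ 2 / d) / x * (1 + x ^ 2 / d) ^ (-d / 2)) := by gcongr
      _ ≤ 3 / 2 * (1 + x ^ 2 / d) ^ (-d / 2) := by nlinarith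

theorem studentT_log_tail_bounds {d u : ℝ} (hd : 1 < d) (hu : 1 ≤ u) :
    1 / 4 / √d * exp (-u / 2) ≤ (studentT d {y | u ≤ d * log (1 + y ^ 2 / d)}).toReal ∧
      (studentT d {y | u ≤ d * log (1 + y ^ 2 / d)}).toReal ≤ 3 / 2 * exp (-u / 2) := by
  have hd0 : 0 < d := by linarith
  set x := √(d * (exp (u / d) - 1))
  have hexp : u / d + 1 ≤ exp (u / d) := add_one_le_exp _
  have hud : d * (u / d) = u := by field_simp
  have hx_sq : x ^ 2 = d * (exp (u / d) - 1) := sq_sqrt (by nlinarith)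
  have hx_base : 1 + x ^ 2 / d = exp (u / d) := by
    rw [hx_sq]
    field_simp
    ring
  have hx : 1 ≤ x := one_le_sqrt.2 (by nlinarith)
  have hset : {y | u ≤ d * log (1 + y ^ 2 / d)} = {y | x ≤ |y|} := by
    ext y
    rw [mem_ofPred_eq, mem_ofPred_eq, ← div_le_iff₀' hd0, le_log_iff_exp_le (by positivity),
      ← hx_base, add_le_add_iff_left, div_le_div_iff_of_pos_right hd0, ← sq_abs y,
      sq_le_sq₀ (sqrt_nonneg _) (abs_nonneg y)]
  have hpow : (1 + x ^ 2 / d) ^ (-d / 2) = exp (-u / 2) := by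
    rw [hx_base, ← exp_mul]
    congr 1
    field_simp
  rw [hset, studentT_setOf_le_abs, ← hpow]
  exact studentT_setOf_lt_abs_bounds hd hx

/-- Lemma on `t` tails.  There are numerical constants
`0 < c₁ < c₂` such that for a `t_n`-variable `X` with `n > 1`,
`c₁ n^{-1/2}(1+x²/n)^{-n/2} ≤ P(|X| > x) ≤ c₂ (1+x²/n)^{-n/2}` for `x ≥ 1`, and
consequently `c₁ n^{-1/2} e^{-u/2} ≤ P(n log(1+X²/n) ≥ u) ≤ c₂ e^{-u/2}` for `u ≥ 1`. -/
theorem studentT_tail_bounds :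
    ∃ c₁ c₂ : ℝ, 0 < c₁ ∧ c₁ < c₂ ∧ ∀ n : ℕ, 1 < n →
      (∀ x : ℝ, 1 ≤ x →
        c₁ / Real.sqrt n * (1 + x ^ 2 / n) ^ (-(n : ℝ) / 2) ≤
            (studentT n {y | x < |y|}).toReal ∧
          (studentT n {y | x < |y|}).toReal ≤ c₂ * (1 + x ^ 2 / n) ^ (-(n : ℝ) / 2)) ∧
      (∀ u : ℝ, 1 ≤ u →
        c₁ / Real.sqrt n * Real.exp (-u / 2) ≤
            (studentT n {y | u ≤ (n : ℝ) * Real.log (1 + y ^ 2 / n)}).toReal ∧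
          (studentT n {y | u ≤ (n : ℝ) * Real.log (1 + y ^ 2 / n)}).toReal ≤
            c₂ * Real.exp (-u / 2)) := by
  refine ⟨1 / 4, 3 / 2, by norm_num, by norm_num, fun n hn => ?_⟩
  have hd : (1 : ℝ) < n := by exact_mod_cast hn
  exact ⟨fun x hx => studentT_setOf_lt_abs_bounds hd hx,
    fun u hu => studentT_log_tail_bounds hd hu⟩
end

section
/- Let {(X_i, Y_i) : i ∈ R} be i.i.d. copies of (X, Y) ~ N(0, I₂). Then: (i) for any x > 0, P( |∑_{i∈R} X_i Y_i| ≥ 2√(x|R|) + 2x ) ≤ 4 e^{−x}; and (ii) if in addition 0 < x < |R|/16, then the centered sample correlation r_R = ∑_{i∈R} X_i Y_i / √(∑_{i∈R} X_i² ∑_{i∈R} Y_i²) satisfies P(|r_R| ≥ x) ≤ 6 exp(−|R| x² / 64). -/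
open MeasureTheory ProbabilityTheory Real Finset
open scoped Classical

/-- The standard bivariate normal distribution `N(0, I₂)`. -/
noncomputable def stdBivNormal : Measure (ℝ × ℝ) :=
  (gaussianReal 0 1).prod (gaussianReal 0 1)

/-- The centered sample correlation (no subtraction of sample means). -/
noncomputable def pearsonR0 {ι : Type*} (R : Finset ι) (x y : ι → ℝ) : ℝ :=
  (∑ i ∈ R, x i * y i) /
    Real.sqrt ((∑ i ∈ R, x i ^ 2) * (∑ i ∈ R, y i ^ 2))

/-- The centered likelihood ratio statistic `L_R = -(|R|-1) log(1 - r_R²)`. -/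
noncomputable def llrStat0 {ι : Type*} (R : Finset ι) (x y : ι → ℝ) : ℝ :=
  -((R.card : ℝ) - 1) * Real.log (1 - pearsonR0 R x y ^ 2)

/-! Chernoff bounds. Integrating out `Y` first, the product `XY` of two independent standard
normals has moment generating function `(1 - t²)^{-1/2} ≤ exp (t² / (2(1 - t)))` for
`0 ≤ t < 1`, and the choice `t = √x / (√|R| + √x)` turns the Chernoff bound for `±∑ XᵢYᵢ` into
`e^{-x}`. If `|r_R| ≥ x`, then either `|∑ XᵢYᵢ| ≥ |R| x / 2` or one of `∑ Xᵢ²`, `∑ Yᵢ²` is at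
most `|R| / 2`; these lower tails of a `χ²_{|R|}` variable are at most `exp (-|R| / 64)` by the
Chernoff bound at `t = 1/4`. For `x > 1` the event is empty, as `|r_R| ≤ 1`. -/

lemma mgf_sq_gaussianReal {v : NNReal} (hv : v ≠ 0) {s : ℝ} (hs : 2 * v * s < 1) :
    mgf (fun x => x ^ 2) (gaussianReal 0 v) s = (√(1 - 2 * v * s))⁻¹ := by
  have hb : 0 < 1 / (2 * v) - s := by
    rw [sub_pos, lt_div_iff₀ (by positivity)]; linarith
  have hdens : ∀ x, gaussianPDFReal 0 v x • rexp (s * x ^ 2)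
      = (√(2 * π * v))⁻¹ * rexp (-(1 / (2 * v) - s) * x ^ 2) := by
    intro x
    rw [gaussianPDFReal, smul_eq_mul, mul_assoc, ← Real.exp_add]
    congr 2
    field_simp
    ring
  rw [mgf, integral_gaussianReal_eq_integral_smul hv]
  simp_rw [hdens]
  rw [integral_const_mul, integral_gaussian,
    show π / (1 / (2 * v) - s) = (2 * π * v) / (1 - 2 * v * s) by
      field_simp,
    Real.sqrt_div' _ (by linarith : 0 ≤ 1 - 2 * v * s)]
  have : 0 < √(2 * π * v) := by positivity
  field_simp

lemma integrable_exp_mul_sq_gaussianReal {v : NNReal} (hv : v ≠ 0) {s : ℝ} (hs : 2 * v * s < 1) :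
    Integrable (fun x => rexp (s * x ^ 2)) (gaussianReal 0 v) := by
  rw [← mgf_pos_iff, mgf_sq_gaussianReal hv hs]
  exact inv_pos.2 (Real.sqrt_pos.2 (by linarith))

instance isProbabilityMeasure_stdBivNormal : IsProbabilityMeasure stdBivNormal := by
  unfold stdBivNormal; infer_instance

lemma stdBivNormal_map_fst : stdBivNormal.map Prod.fst = gaussianReal 0 1 := by
  simp [stdBivNormal]

lemma stdBivNormal_map_snd : stdBivNormal.map Prod.snd = gaussianReal 0 1 := by
  simp [stdBivNormal]

lemma integral_exp_mul_mul_gaussianReal (t x : ℝ) :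
    ∫ y, rexp (t * (x * y)) ∂gaussianReal 0 1 = rexp (t ^ 2 / 2 * x ^ 2) := by
  have h := congrFun (mgf_fun_id_gaussianReal (μ := 0) (v := 1)) (t * x)
  simp only [mgf, zero_mul, zero_add, NNReal.coe_one, one_mul] at h
  simp_rw [← mul_assoc, h]
  ring_nf

lemma integrable_exp_mul_mul_stdBivNormal {t : ℝ} (ht : |t| < 1) :
    Integrable (fun p : ℝ × ℝ => rexp (t * (p.1 * p.2))) stdBivNormal := by
  have hs : 2 * ((1 : NNReal) : ℝ) * (t ^ 2 / 2) < 1 := by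
    have := (sq_lt_one_iff_abs_lt_one t).2 ht
    push_cast; linarith
  unfold stdBivNormal
  refine (integrable_prod_iff (by fun_prop)).2 ⟨ae_of_all _ fun x => ?_, ?_⟩
  · simpa only [mul_assoc] using integrable_exp_mul_gaussianReal (μ := 0) (v := 1) (t * x)
  · simp_rw [Real.norm_of_nonneg (Real.exp_nonneg _), integral_exp_mul_mul_gaussianReal]
    exact integrable_exp_mul_sq_gaussianReal one_ne_zero hs

lemma mgf_mul_stdBivNormal {t : ℝ} (ht : |t| < 1) :
    mgf (fun p : ℝ × ℝ => p.1 * p.2) stdBivNormal t = (√(1 - t ^ 2))⁻¹ := by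
  have hs : 2 * ((1 : NNReal) : ℝ) * (t ^ 2 / 2) < 1 := by
    have := (sq_lt_one_iff_abs_lt_one t).2 ht
    push_cast; linarith
  have hint := integrable_exp_mul_mul_stdBivNormal ht
  unfold stdBivNormal at hint
  rw [mgf, stdBivNormal, integral_prod _ hint]
  simp_rw [integral_exp_mul_mul_gaussianReal]
  exact (mgf_sq_gaussianReal one_ne_zero hs).trans (by congr 3; push_cast; ring)

lemma inv_sqrt_one_sub_sq_le_exp {t : ℝ} (h0 : 0 ≤ t) (h1 : t < 1) :
    (√(1 - t ^ 2))⁻¹ ≤ rexp (t ^ 2 / (2 * (1 - t))) := by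
  have hv : 0 ≤ t ^ 2 / (1 - t) := div_nonneg (sq_nonneg t) (by linarith)
  -- `(1 - t²)(1 + v) = 1 + t³` for `v = t²/(1 - t)`, and `1 + v ≤ exp v`
  have hexp : rexp (-(t ^ 2 / (1 - t))) ≤ 1 - t ^ 2 := by
    have hprod : (1 - t ^ 2) * (t ^ 2 / (1 - t) + 1) = 1 + t ^ 3 := by
      field_simp [(by linarith : 1 - t ≠ 0)]; ring
    rw [Real.exp_neg, inv_le_iff_one_le_mul₀ (Real.exp_pos _)]
    nlinarith [Real.add_one_le_exp (t ^ 2 / (1 - t)), pow_nonneg h0 3]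
  calc (√(1 - t ^ 2))⁻¹ ≤ (√(rexp (-(t ^ 2 / (1 - t)))))⁻¹ := by
        gcongr
    _ = rexp (t ^ 2 / (2 * (1 - t))) := by
        rw [← Real.exp_half, ← Real.exp_neg, neg_div, neg_neg, div_div, mul_comm]

lemma inv_sqrt_three_halves_le_exp : (√(3 / 2 : ℝ))⁻¹ ≤ rexp (-(9 / 64)) := by
  rw [← Real.sqrt_inv, show -(9 / 64 : ℝ) = -(9 / 32) / 2 by norm_num, Real.exp_half]
  gcongr
  linarith [Real.add_one_le_exp (-(9 / 32) : ℝ)]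

lemma chernoff_exponent_le {u v : ℝ} (hu : 0 < u) (hv : 0 < v) :
    -(u / (v + u)) * (2 * (u * v) + 2 * u ^ 2)
      + v ^ 2 * ((u / (v + u)) ^ 2 / (2 * (1 - u / (v + u)))) ≤ -u ^ 2 := by
  have hs : 0 < v + u := by linarith
  have h1 : -(u / (v + u)) * (2 * (u * v) + 2 * u ^ 2) = -(2 * u ^ 2) := by field_simp
  have h2 : v ^ 2 * ((u / (v + u)) ^ 2 / (2 * (1 - u / (v + u)))) = v * u ^ 2 / (2 * (v + u)) := by
    rw [show 1 - u / (v + u) = v / (v + u) by field_simp; ring]; field_simp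
  have h3 : v * u ^ 2 / (2 * (v + u)) ≤ u ^ 2 / 2 := by
    rw [div_le_div_iff₀ (by positivity) (by norm_num)]; nlinarith
  rw [h1, h2]
  linarith [sq_nonneg u]

lemma abs_pearsonR0_le_one {ι : Type*} (R : Finset ι) (a b : ι → ℝ) : |pearsonR0 R a b| ≤ 1 := by
  rw [pearsonR0, abs_div, abs_of_nonneg (Real.sqrt_nonneg _)]
  exact div_le_one_of_le₀ (Real.abs_le_sqrt (Finset.sum_mul_sq_le_sq_mul_sq R a b))
    (Real.sqrt_nonneg _)

lemma mul_le_abs_sum_mul_of_le_abs_pearsonR0 {ι : Type*} {R : Finset ι} {a b : ι → ℝ} {c x : ℝ}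
    (hc : 0 ≤ c) (hx : 0 ≤ x) (ha : c ≤ ∑ i ∈ R, a i ^ 2) (hb : c ≤ ∑ i ∈ R, b i ^ 2)
    (hr : x ≤ |pearsonR0 R a b|) : c * x ≤ |∑ i ∈ R, a i * b i| := by
  set q := √((∑ i ∈ R, a i ^ 2) * ∑ i ∈ R, b i ^ 2)
  have hcq : c ≤ q := Real.le_sqrt_of_sq_le (by nlinarith)
  calc c * x ≤ q * |pearsonR0 R a b| := mul_le_mul hcq hr hx (Real.sqrt_nonneg _)
    _ = |∑ i ∈ R, a i * b i| / q * q := by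
        rw [pearsonR0, abs_div, abs_of_nonneg (Real.sqrt_nonneg _), mul_comm]
    _ ≤ |∑ i ∈ R, a i * b i| := by
        rcases (show 0 ≤ q from Real.sqrt_nonneg _).eq_or_lt with hq | hq
        · simp [← hq]
        · rw [div_mul_cancel₀ _ hq.ne']

lemma pearsonR0_univ_coe_sort {ι : Type*} (R : Finset ι) (a b : ι → ℝ) :
    pearsonR0 (univ : Finset R) (fun i => a i) (fun i => b i) = pearsonR0 R a b := by
  rw [pearsonR0, pearsonR0, Finset.sum_coe_sort R (fun i => a i * b i),
    Finset.sum_coe_sort R (fun i => a i ^ 2), Finset.sum_coe_sort R (fun i => b i ^ 2)]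

section Chernoff

variable {Ω κ E : Type*} [MeasurableSpace Ω] {P : Measure Ω} [IsProbabilityMeasure P] [Fintype κ]
  [MeasurableSpace E] {μ : Measure E} [IsProbabilityMeasure μ] {V : κ → Ω → E} {f : E → ℝ}
  {t : ℝ}

theorem measureReal_le_sum_comp_le (hind : iIndepFun V P) (hV : ∀ i, AEMeasurable (V i) P)
    (hlaw : ∀ i, P.map (V i) = μ) (hf : Measurable f) (ht : 0 ≤ t)
    (hint : Integrable (fun x => rexp (t * f x)) μ) (a : ℝ) :
    P.real {ω | a ≤ ∑ i, f (V i ω)} ≤ rexp (-t * a) * mgf f μ t ^ Fintype.card κ := by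
  have hmgf : ∀ i, mgf (f ∘ V i) P t = mgf f μ t := fun i => by
    rw [← hlaw i, mgf_map (hV i) (by fun_prop)]
  have hsum : mgf (∑ i, f ∘ V i) P t = mgf f μ t ^ Fintype.card κ := by
    rw [(hind.comp (fun _ => f) fun _ => hf).mgf_sum₀ (fun i => hf.comp_aemeasurable (hV i))]
    simp_rw [hmgf, Finset.prod_const, Finset.card_univ]
  have hint_sum : Integrable (fun ω => rexp (t * (∑ i, f ∘ V i) ω)) P := by
    rw [← mgf_pos_iff, hsum]
    exact pow_pos (mgf_pos hint) _
  simpa [hsum] using measure_ge_le_exp_mul_mgf a ht hint_sum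

theorem measureReal_le_abs_sum_comp_le (hind : iIndepFun V P) (hV : ∀ i, AEMeasurable (V i) P)
    (hlaw : ∀ i, P.map (V i) = μ) (hf : Measurable f) (ht : 0 ≤ t)
    (hint : Integrable (fun x => rexp (t * f x)) μ)
    (hint_neg : Integrable (fun x => rexp (-t * f x)) μ) (a : ℝ) :
    P.real {ω | a ≤ |∑ i, f (V i ω)|} ≤
      rexp (-t * a) * (mgf f μ t ^ Fintype.card κ + mgf f μ (-t) ^ Fintype.card κ) := by
  have hupper := measureReal_le_sum_comp_le hind hV hlaw hf ht hint a
  have hlower := measureReal_le_sum_comp_le hind hV hlaw hf.neg ht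
    (by simpa only [Pi.neg_apply, mul_neg, neg_mul] using hint_neg) a
  rw [mgf_neg] at hlower
  calc P.real {ω | a ≤ |∑ i, f (V i ω)|}
      ≤ P.real ({ω | a ≤ ∑ i, f (V i ω)} ∪ {ω | a ≤ ∑ i, (-f) (V i ω)}) := by
        refine measureReal_mono (fun ω hω => ?_)
        simpa [le_abs', le_neg, or_comm] using hω
    _ ≤ _ := (measureReal_union_le _ _).trans (by rw [mul_add]; exact add_le_add hupper hlower)

end Chernoff

section Tails

variable {Ω κ : Type*} [MeasurableSpace Ω] {P : Measure Ω} [IsProbabilityMeasure P] [Fintype κ]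

theorem measureReal_le_abs_sum_mul_le {V : κ → Ω → ℝ × ℝ} (hind : iIndepFun V P)
    (hV : ∀ i, AEMeasurable (V i) P) (hlaw : ∀ i, P.map (V i) = stdBivNormal)
    {x : ℝ} (hx : 0 < x) :
    P.real {ω | 2 * √(x * Fintype.card κ) + 2 * x ≤ |∑ i, (V i ω).1 * (V i ω).2|} ≤
      2 * rexp (-x) := by
  rcases (Fintype.card κ).eq_zero_or_pos with hn | hn
  · have : IsEmpty κ := Fintype.card_eq_zero_iff.1 hn
    simp [show ¬2 * x ≤ 0 by linarith]; positivity
  set u := √x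
  set v := √(Fintype.card κ : ℝ)
  have hu : 0 < u := Real.sqrt_pos.2 hx
  have hv : 0 < v := Real.sqrt_pos.2 (by exact_mod_cast hn)
  set t := u / (v + u)
  have ht0 : 0 ≤ t := by positivity
  have ht1 : t < 1 := (div_lt_one (by positivity)).2 (by linarith)
  have hmgf : ∀ s, |s| = t →
      mgf (fun p : ℝ × ℝ => p.1 * p.2) stdBivNormal s ≤ rexp (t ^ 2 / (2 * (1 - t))) := by
    intro s hs
    rw [mgf_mul_stdBivNormal (hs ▸ ht1), ← sq_abs, hs]
    exact inv_sqrt_one_sub_sq_le_exp ht0 ht1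
  have habs : |t| < 1 := by rwa [abs_of_nonneg ht0]
  have habs_neg : |-t| < 1 := by rwa [abs_neg]
  refine (measureReal_le_abs_sum_comp_le hind hV hlaw (by fun_prop) ht0
    (integrable_exp_mul_mul_stdBivNormal habs)
    (integrable_exp_mul_mul_stdBivNormal habs_neg) _).trans ?_
  have hexponent := chernoff_exponent_le hu hv
  rw [Real.sq_sqrt hx.le, Real.sq_sqrt (Nat.cast_nonneg _)] at hexponent
  calc rexp (-t * (2 * √(x * Fintype.card κ) + 2 * x)) *
        (mgf (fun p : ℝ × ℝ => p.1 * p.2) stdBivNormal t ^ Fintype.card κ +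
          mgf (fun p : ℝ × ℝ => p.1 * p.2) stdBivNormal (-t) ^ Fintype.card κ)
      ≤ rexp (-t * (2 * √(x * Fintype.card κ) + 2 * x)) *
          (rexp (t ^ 2 / (2 * (1 - t))) ^ Fintype.card κ +
            rexp (t ^ 2 / (2 * (1 - t))) ^ Fintype.card κ) := by
        gcongr
        · exact mgf_nonneg
        · exact hmgf t (abs_of_nonneg ht0)
        · exact mgf_nonneg
        · exact hmgf (-t) (by rw [abs_neg, abs_of_nonneg ht0])
    _ = 2 * rexp (-t * (2 * (u * v) + 2 * x) + Fintype.card κ * (t ^ 2 / (2 * (1 - t)))) := by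
        rw [← two_mul, ← Real.exp_nat_mul, Real.sqrt_mul hx.le, mul_left_comm, Real.exp_add]
    _ ≤ 2 * rexp (-x) := by gcongr

theorem measureReal_sum_sq_le_half_card_le {W : κ → Ω → ℝ} (hind : iIndepFun W P)
    (hW : ∀ i, AEMeasurable (W i) P) (hlaw : ∀ i, P.map (W i) = gaussianReal 0 1) :
    P.real {ω | ∑ i, W i ω ^ 2 ≤ Fintype.card κ / 2} ≤ rexp (-(Fintype.card κ) / 64) := by
  have hmgf : mgf (fun x => -x ^ 2) (gaussianReal 0 1) (1 / 4) = (√(3 / 2))⁻¹ := by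
    rw [show (fun x : ℝ => -x ^ 2) = -fun x => x ^ 2 from rfl, mgf_neg,
      mgf_sq_gaussianReal one_ne_zero (by norm_num)]
    norm_num
  have hint : Integrable (fun x : ℝ => rexp (1 / 4 * -x ^ 2)) (gaussianReal 0 1) := by
    simpa only [mul_neg, ← neg_mul] using
      integrable_exp_mul_sq_gaussianReal one_ne_zero (s := -(1 / 4)) (by norm_num)
  calc P.real {ω | ∑ i, W i ω ^ 2 ≤ Fintype.card κ / 2}
      = P.real {ω | -(Fintype.card κ / 2 : ℝ) ≤ ∑ i, (fun x => -x ^ 2) (W i ω)} := by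
        simp only [Finset.sum_neg_distrib, neg_le_neg_iff]
    _ ≤ rexp (-(1 / 4) * -(Fintype.card κ / 2 : ℝ)) *
          mgf (fun x => -x ^ 2) (gaussianReal 0 1) (1 / 4) ^ Fintype.card κ :=
        measureReal_le_sum_comp_le hind hW hlaw (by fun_prop) (by norm_num) hint _
    _ ≤ rexp (Fintype.card κ / 8) * rexp (-(9 / 64)) ^ Fintype.card κ := by
        rw [hmgf]
        gcongr
        · exact le_of_eq (by ring)
        · exact inv_sqrt_three_halves_le_exp
    _ = rexp (-(Fintype.card κ) / 64) := by
        rw [← Real.exp_nat_mul, ← Real.exp_add]; ring_nf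

theorem measureReal_le_abs_pearsonR0_le [Nonempty κ] {V : κ → Ω → ℝ × ℝ} (hind : iIndepFun V P)
    (hV : ∀ i, AEMeasurable (V i) P) (hlaw : ∀ i, P.map (V i) = stdBivNormal)
    {x : ℝ} (hx0 : 0 < x) (hx1 : x ≤ 1) :
    P.real {ω | x ≤ |pearsonR0 univ (fun i => (V i ω).1) (fun i => (V i ω).2)|} ≤
      4 * rexp (-(Fintype.card κ) * x ^ 2 / 64) := by
  set n : ℝ := (Fintype.card κ : ℝ)
  have hn : 0 < n := by simp [n, Fintype.card_pos]
  set u := n * x ^ 2 / 64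
  have hu : 0 < u := by positivity
  have hu_le : u ≤ n / 64 := div_le_div_of_nonneg_right
    (mul_le_of_le_one_right hn.le (pow_le_one₀ hx0.le hx1)) (by norm_num)
  have hcoord : ∀ proj : ℝ × ℝ → ℝ, Measurable proj → stdBivNormal.map proj = gaussianReal 0 1 →
      P.real {ω | ∑ i, proj (V i ω) ^ 2 ≤ n / 2} ≤ rexp (-u) := by
    intro proj hproj hproj_law
    refine (measureReal_sum_sq_le_half_card_le (hind.comp (fun _ => proj) fun _ => hproj)
      (fun i => hproj.comp_aemeasurable (hV i)) fun i => ?_).trans ?_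
    · rw [← hproj_law, ← hlaw i, AEMeasurable.map_map_of_aemeasurable hproj.aemeasurable (hV i)]
    · gcongr
      change -n / 64 ≤ -u
      linarith
  have hprod : P.real {ω | n / 2 * x ≤ |∑ i, (V i ω).1 * (V i ω).2|} ≤ 2 * rexp (-u) := by
    have hthreshold : 2 * √(u * n) + 2 * u ≤ n / 2 * x := by
      rw [show u * n = (n * x / 8) ^ 2 by ring, Real.sqrt_sq (by positivity)]
      nlinarith [show u = n * x ^ 2 / 64 from rfl,
        mul_le_mul_of_nonneg_left hx1 (mul_pos hn hx0).le]
    exact (measureReal_mono fun ω (hω : n / 2 * x ≤ _) => hthreshold.trans hω).trans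
      (measureReal_le_abs_sum_mul_le hind hV hlaw hu)
  calc P.real {ω | x ≤ |pearsonR0 univ (fun i => (V i ω).1) (fun i => (V i ω).2)|}
      ≤ P.real ({ω | n / 2 * x ≤ |∑ i, (V i ω).1 * (V i ω).2|} ∪
          {ω | ∑ i, (V i ω).1 ^ 2 ≤ n / 2} ∪ {ω | ∑ i, (V i ω).2 ^ 2 ≤ n / 2}) := by
        refine measureReal_mono fun ω hω => ?_
        by_contra h
        simp only [Set.mem_union, Set.mem_ofPred_eq, not_or, not_le] at h
        exact h.1.1.not_ge (mul_le_abs_sum_mul_of_le_abs_pearsonR0 (by positivity) hx0.le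
          h.1.2.le h.2.le hω)
    _ ≤ 2 * rexp (-u) + rexp (-u) + rexp (-u) :=
        (measureReal_union_le _ _).trans (add_le_add ((measureReal_union_le _ _).trans
          (add_le_add hprod (hcoord _ measurable_fst stdBivNormal_map_fst)))
          (hcoord _ measurable_snd stdBivNormal_map_snd))
    _ = 4 * rexp (-(Fintype.card κ) * x ^ 2 / 64) := by
        rw [neg_mul, neg_div]; ring

end Tails

/-- Lemma on sums of products and the centered correlation.  For
i.i.d. `N(0, I₂)` pairs on `R`: (i) `P(|∑ X_i Y_i| ≥ 2√(x|R|) + 2x) ≤ 4 e^{-x}` for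
`x > 0`; (ii) `P(|r_R| ≥ x) ≤ 6 exp(-|R| x²/64)` for `0 < x < |R|/16`. -/
theorem centered_correlation_tail_bounds
    (Ω : Type) (mΩ : MeasurableSpace Ω) (P : Measure Ω) (hP : IsProbabilityMeasure P)
    (ι : Type) (R : Finset ι) (X Y : ι → Ω → ℝ)
    (hIndep : iIndepFun
      (fun (i : {j // j ∈ R}) ω => (X i.1 ω, Y i.1 ω)) P)
    (hDist : ∀ i ∈ R, Measure.map (fun ω => (X i ω, Y i ω)) P = stdBivNormal) :
    (∀ x : ℝ, 0 < x →
      (P {ω | 2 * Real.sqrt (x * R.card) + 2 * x ≤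
          |∑ i ∈ R, X i ω * Y i ω|}).toReal ≤ 4 * Real.exp (-x)) ∧
    (∀ x : ℝ, 0 < x → x < (R.card : ℝ) / 16 →
      (P {ω | x ≤ |pearsonR0 R (fun i => X i ω) (fun i => Y i ω)|}).toReal ≤
        6 * Real.exp (-(R.card : ℝ) * x ^ 2 / 64)) := by
  have hlaw : ∀ i : {j // j ∈ R}, P.map (fun ω => (X i ω, Y i ω)) = stdBivNormal :=
    fun i => hDist i i.2
  have hV : ∀ i : {j // j ∈ R}, AEMeasurable (fun ω => (X i ω, Y i ω)) P :=
    fun i => aemeasurable_of_map_neZero (by rw [hlaw i]; infer_instance)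
  have hcard : Fintype.card {j // j ∈ R} = R.card := Fintype.card_coe R
  simp_rw [← measureReal_def, ← hcard]
  refine ⟨fun x hx => ?_, fun x hx hxR => ?_⟩
  · simp_rw [← Finset.sum_coe_sort R]
    linarith [measureReal_le_abs_sum_mul_le hIndep hV hlaw hx, Real.exp_pos (-x)]
  rcases le_or_gt x 1 with hx1 | hx1
  · have hpos : (0 : ℝ) < Fintype.card {j // j ∈ R} := by linarith
    have : Nonempty {j // j ∈ R} := Fintype.card_pos_iff.1 (by exact_mod_cast hpos)
    simp_rw [← pearsonR0_univ_coe_sort R]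
    linarith [measureReal_le_abs_pearsonR0_le hIndep hV hlaw hx hx1,
      Real.exp_pos (-(Fintype.card {j // j ∈ R} : ℝ) * x ^ 2 / 64)]
  · simp [((abs_pearsonR0_le_one R _ _).trans_lt hx1).not_ge]
    positivity
end
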